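/- The class B_n^σ(β) is closed under the Bernardi integral transform F(z) = ((c+1)/z^c) ∫_0^z t^{c-1} f(t) dt when c + 1 = σ − n > 0: if f ∈ B_n^σ(β), then F ∈ B_n^σ(β). -/

import Mathlib

open Complex MeasureTheory

/-- The Carathéodory class `P`: analytic on the unit disk, value `1` at `0`,
positive real part. -/
def IsCara (p : ℂ → ℂ) : Prop :=
  DifferentiableOn ℂ p (Metric.ball 0 1) ∧ p 0 = 1 ∧
    ∀ z ∈ Metric.ball (0 : ℂ) 1, 0 < (p z).re

/-- The σ-nth integral iterate (averaged form after substituting `t = s z`):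
`p_{σ,n}(z) = (σ-(n-1)) ∫_0^1 s^(σ-n) p_{σ,n-1}(s z) ds`. -/
noncomputable def sigmaIter (σ : ℝ) : ℕ → (ℂ → ℂ) → (ℂ → ℂ)
  | 0, p => p
  | (n + 1), p => fun z =>
      ((σ - (n : ℝ)) : ℂ) *
        ∫ s in (0 : ℝ)..1, ((s ^ (σ - ((n : ℝ) + 1)) : ℝ) : ℂ) * sigmaIter σ n p ((s : ℂ) * z)

/-- The coefficient multiplier `[σ]_{n/k} = (σ-(n-1))_n / (σ+k-(n-1))_n`
(Pochhammer / rising factorial). -/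
noncomputable def poch (σ : ℝ) (n k : ℕ) : ℝ :=
  (ascPochhammer ℝ n).eval (σ - ((n : ℝ) - 1)) /
    (ascPochhammer ℝ n).eval (σ + (k : ℝ) - ((n : ℝ) - 1))

/-- Membership in `P_n^σ`. -/
def MemPn (σ : ℝ) (n : ℕ) (q : ℂ → ℂ) : Prop :=
  ∃ p : ℂ → ℂ, IsCara p ∧ ∀ z ∈ Metric.ball (0 : ℂ) 1, q z = sigmaIter σ n p z

/-- Membership in `B_n^σ(β)`: `f(z) = z (β + (1-β) p_{σ,n}(z))` for some Carathéodory `p`. -/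
def MemB (σ : ℝ) (n : ℕ) (β : ℝ) (f : ℂ → ℂ) : Prop :=
  ∃ p : ℂ → ℂ, IsCara p ∧ ∀ z ∈ Metric.ball (0 : ℂ) 1,
    f z = z * ((β : ℂ) + ((1 : ℂ) - β) * sigmaIter σ n p z)

/-!
Write `R_a g (z) = ∫₀¹ s^a g(sz) ds` (`radialIntegral a g z`). Substituting
`f(z) = z (β + (1-β) P(z))`, `P = p_{σ,n}`, into the Bernardi integral gives `F(z) = z (β + (1-β) (c+1) R_c P (z))`. Each step of the
iteration defining `p_{σ,n}` is a multiple of some `R_a`, and the operators `R_a` commute with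
each other by Fubini, so `(c+1) R_c p_{σ,n} = q_{σ,n}` for `q = (c+1) R_c p`. Finally `q` is again
a Carathéodory function: it is holomorphic (differentiation under the integral sign),
`q(0) = p(0) = 1`, and `Re q > 0` because it is a positively weighted average of `Re p`.
-/

open Set Metric

noncomputable def radialIntegral (a : ℝ) (g : ℂ → ℂ) (z : ℂ) : ℂ :=
  ∫ s in (0 : ℝ)..1, ((s ^ a : ℝ) : ℂ) * g ((s : ℂ) * z)

lemma norm_ofReal_mul_le {s : ℝ} (hs : s ∈ Icc (0 : ℝ) 1) (z : ℂ) : ‖(s : ℂ) * z‖ ≤ ‖z‖ := by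
  rw [norm_mul, Complex.norm_real, Real.norm_of_nonneg hs.1]
  exact mul_le_of_le_one_left (norm_nonneg z) hs.2

lemma ofReal_mul_mem_ball {s : ℝ} (hs : s ∈ Icc (0 : ℝ) 1) {z : ℂ} {r : ℝ} (hz : z ∈ ball 0 r) :
    (s : ℂ) * z ∈ ball 0 r :=
  mem_ball_zero_iff.2 ((norm_ofReal_mul_le hs z).trans_lt (mem_ball_zero_iff.1 hz))

lemma intervalIntegrable_rpow_mul_comp {a : ℝ} (ha : -1 < a) {g : ℂ → ℂ}
    (hg : ContinuousOn g (ball 0 1)) {z : ℂ} (hz : z ∈ ball 0 1) :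
    IntervalIntegrable (fun s : ℝ => ((s ^ a : ℝ) : ℂ) * g ((s : ℂ) * z)) volume 0 1 := by
  rw [intervalIntegrable_iff_integrableOn_Icc_of_le zero_le_one]
  have hrpow : IntegrableOn (fun s : ℝ => ((s ^ a : ℝ) : ℂ)) (Icc 0 1) :=
    ((intervalIntegrable_iff_integrableOn_Icc_of_le zero_le_one).1
      (intervalIntegral.intervalIntegrable_rpow' ha)).ofReal
  exact hrpow.mul_continuousOn (hg.comp (by fun_prop) fun s hs => ofReal_mul_mem_ball hs hz)
    isCompact_Icc

lemma integral_rpow_ofReal {a : ℝ} (ha : -1 < a) :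
    ∫ s in (0 : ℝ)..1, ((s ^ a : ℝ) : ℂ) = ((a + 1 : ℝ) : ℂ)⁻¹ := by
  rw [intervalIntegral.integral_ofReal, integral_rpow (Or.inl ha), Real.one_rpow,
    Real.zero_rpow (by linarith), sub_zero, one_div, Complex.ofReal_inv]

lemma radialIntegral_const {a : ℝ} (ha : -1 < a) (C z : ℂ) :
    radialIntegral a (fun _ => C) z = C / ((a + 1 : ℝ) : ℂ) := by
  rw [radialIntegral, intervalIntegral.integral_mul_const, integral_rpow_ofReal ha,
    inv_mul_eq_div]

lemma radialIntegral_zero_right {a : ℝ} (ha : -1 < a) (g : ℂ → ℂ) :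
    radialIntegral a g 0 = g 0 / ((a + 1 : ℝ) : ℂ) := by
  simpa only [radialIntegral, mul_zero] using radialIntegral_const ha (g 0) 0

lemma radialIntegral_const_mul (a : ℝ) (C : ℂ) (g : ℂ → ℂ) (z : ℂ) :
    radialIntegral a (fun w => C * g w) z = C * radialIntegral a g z := by
  simp only [radialIntegral, mul_left_comm _ C, intervalIntegral.integral_const_mul]

lemma radialIntegral_congr {a : ℝ} {g h : ℂ → ℂ} (hgh : EqOn g h (ball 0 1)) {z : ℂ}
    (hz : z ∈ ball 0 1) : radialIntegral a g z = radialIntegral a h z := by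
  refine intervalIntegral.integral_congr fun s hs => ?_
  rw [uIcc_of_le zero_le_one] at hs
  rw [hgh (ofReal_mul_mem_ball hs hz)]

lemma re_radialIntegral_pos {a : ℝ} (ha : -1 < a) {g : ℂ → ℂ}
    (hg : ContinuousOn g (ball 0 1)) (hpos : ∀ w ∈ ball (0 : ℂ) 1, 0 < (g w).re)
    {z : ℂ} (hz : z ∈ ball 0 1) : 0 < (radialIntegral a g z).re := by
  have hint := intervalIntegrable_rpow_mul_comp ha hg hz
  rw [radialIntegral, ← RCLike.re_to_complex, ← intervalIntegral.intervalIntegral_re hint]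
  refine intervalIntegral.intervalIntegral_pos_of_pos_on ⟨hint.1.re, hint.2.re⟩ (fun s hs => ?_)
    zero_lt_one
  have hg_pos := hpos _ (ofReal_mul_mem_ball (Ioo_subset_Icc_self hs) hz)
  simp only [RCLike.re_to_complex, Complex.re_ofReal_mul]
  exact mul_pos (Real.rpow_pos_of_pos hs.1 a) hg_pos

lemma differentiableOn_radialIntegral {a : ℝ} (ha : -1 < a) {g : ℂ → ℂ}
    (hg : DifferentiableOn ℂ g (ball 0 1)) :
    DifferentiableOn ℂ (radialIntegral a g) (ball 0 1) := by
  intro z₀ hz₀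
  set ε := (1 - ‖z₀‖) / 2 with hε
  have hz₀' : ‖z₀‖ < 1 := mem_ball_zero_iff.1 hz₀
  have hε_pos : 0 < ε := by linarith
  have hsub : ball z₀ ε ⊆ ball 0 (‖z₀‖ + ε) :=
    ball_subset_ball' (by rw [dist_zero_right, add_comm])
  have hg' : ContinuousOn (deriv g) (ball 0 1) :=
    (hg.analyticOnNhd isOpen_ball).deriv.continuousOn
  obtain ⟨M, hM⟩ := (isCompact_closedBall (0 : ℂ) (‖z₀‖ + ε)).exists_bound_of_continuousOn
    (hg'.mono (closedBall_subset_ball (by linarith)))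
  have hball : ∀ x ∈ ball z₀ ε, x ∈ ball (0 : ℂ) 1 := fun x hx =>
    ball_subset_ball (by linarith) (hsub hx)
  have hderiv := intervalIntegral.hasDerivAt_integral_of_dominated_loc_of_deriv_le
    (F := fun x (s : ℝ) => ((s ^ a : ℝ) : ℂ) * g ((s : ℂ) * x))
    (F' := fun x (s : ℝ) => ((s ^ a : ℝ) : ℂ) * deriv g ((s : ℂ) * x) * s)
    (bound := fun s => M * s ^ a) (ball_mem_nhds z₀ hε_pos)
    (Filter.eventually_of_mem (ball_mem_nhds z₀ hε_pos) fun x hx =>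
      (intervalIntegrable_rpow_mul_comp ha hg.continuousOn (hball x hx))
        |>.aestronglyMeasurable_restrict_uIoc)
    (intervalIntegrable_rpow_mul_comp ha hg.continuousOn hz₀)
    ?_ ?_ ((intervalIntegral.intervalIntegrable_rpow' ha).const_mul M) ?_
  · exact (hderiv.2.congr_of_eventuallyEq (.of_forall fun _ => rfl)).differentiableAt
      |>.differentiableWithinAt
  · exact (intervalIntegrable_rpow_mul_comp ha hg' hz₀).aestronglyMeasurable_restrict_uIoc.mul
      Complex.continuous_ofReal.aestronglyMeasurable
  · refine .of_forall fun s hs x hx => ?_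
    rw [uIoc_of_le zero_le_one] at hs
    have hsa : 0 ≤ s ^ a := Real.rpow_nonneg hs.1.le a
    have hgx := hM _
      (ball_subset_closedBall (ofReal_mul_mem_ball (Ioc_subset_Icc_self hs) (hsub hx)))
    calc ‖((s ^ a : ℝ) : ℂ) * deriv g ((s : ℂ) * x) * s‖
        = s ^ a * ‖deriv g ((s : ℂ) * x)‖ * s := by
          rw [norm_mul, norm_mul, Complex.norm_real, Complex.norm_real, Real.norm_of_nonneg hsa,
            Real.norm_of_nonneg hs.1.le]
      _ ≤ s ^ a * ‖deriv g ((s : ℂ) * x)‖ := mul_le_of_le_one_right (by positivity) hs.2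
      _ ≤ M * s ^ a := by rw [mul_comm M]; exact mul_le_mul_of_nonneg_left hgx hsa
  · refine .of_forall fun s hs x hx => ?_
    rw [uIoc_of_le zero_le_one] at hs
    have hsx := ofReal_mul_mem_ball (Ioc_subset_Icc_self hs) (hball x hx)
    have hgd := (hg.differentiableAt (isOpen_ball.mem_nhds hsx)).hasDerivAt
    simpa only [mul_one, mul_assoc, Function.comp_apply] using
      (hgd.comp x ((hasDerivAt_id x).const_mul (s : ℂ))).const_mul ((s ^ a : ℝ) : ℂ)

lemma radialIntegral_comm {a b : ℝ} (ha : -1 < a) (hb : -1 < b) {g : ℂ → ℂ}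
    (hg : ContinuousOn g (ball 0 1)) {z : ℂ} (hz : z ∈ ball 0 1) :
    radialIntegral a (radialIntegral b g) z = radialIntegral b (radialIntegral a g) z := by
  set k : ℝ → ℝ → ℂ := fun s t => ((s ^ a : ℝ) : ℂ) * ((t ^ b : ℝ) : ℂ) * g (t * (s * z))
  have hrpow : ∀ {c : ℝ}, -1 < c → Integrable (fun s : ℝ => ((s ^ c : ℝ) : ℂ))
      (volume.restrict (Ioc 0 1)) := fun hc =>
    ((intervalIntegrable_iff_integrableOn_Ioc_of_le zero_le_one).1
      (intervalIntegral.intervalIntegrable_rpow' hc)).ofReal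
  have hk : Integrable (Function.uncurry k)
      ((volume.restrict (Ioc 0 1)).prod (volume.restrict (Ioc 0 1))) := by
    have hprod := (hrpow ha).mul_prod (hrpow hb)
    rw [Measure.prod_restrict] at hprod ⊢
    refine IntegrableOn.mul_continuousOn_of_subset hprod
      (K := Icc 0 1 ×ˢ Icc 0 1) ?_ (measurableSet_Ioc.prod measurableSet_Ioc)
      (isCompact_Icc.prod isCompact_Icc) (prod_mono Ioc_subset_Icc_self Ioc_subset_Icc_self)
    exact hg.comp (by fun_prop) fun p hp =>
      ofReal_mul_mem_ball hp.2 (ofReal_mul_mem_ball hp.1 hz)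
  calc radialIntegral a (radialIntegral b g) z
      = ∫ s in Ioc (0 : ℝ) 1, ∫ t in Ioc (0 : ℝ) 1, k s t := by
        simp only [k, radialIntegral, intervalIntegral.integral_of_le zero_le_one,
          ← integral_const_mul, mul_assoc]
    _ = ∫ t in Ioc (0 : ℝ) 1, ∫ s in Ioc (0 : ℝ) 1, k s t := integral_integral_swap hk
    _ = radialIntegral b (radialIntegral a g) z := by
        simp only [k, radialIntegral, intervalIntegral.integral_of_le zero_le_one,
          ← integral_const_mul]
        refine integral_congr_ae (.of_forall fun t => integral_congr_ae (.of_forall fun s => ?_))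
        simp only [mul_left_comm (t : ℂ)]
        ring

lemma integral_rpow_sub_one_mul_ofReal_mul (c : ℝ) (h : ℂ → ℂ) (z : ℂ) :
    ∫ s in (0 : ℝ)..1, ((s ^ (c - 1) : ℝ) : ℂ) * ((s : ℂ) * z * h ((s : ℂ) * z)) =
      z * radialIntegral c h z := by
  rw [radialIntegral, ← intervalIntegral.integral_const_mul,
    intervalIntegral.integral_of_le zero_le_one, intervalIntegral.integral_of_le zero_le_one]
  refine setIntegral_congr_fun measurableSet_Ioc fun s hs => ?_
  have hs0 : (s : ℂ) ≠ 0 := Complex.ofReal_ne_zero.2 hs.1.ne'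
  simp only [Real.rpow_sub_one hs.1.ne', Complex.ofReal_div]
  field_simp

lemma radialIntegral_const_add_mul {a : ℝ} (ha : -1 < a) (A B : ℂ) {g : ℂ → ℂ}
    (hg : ContinuousOn g (ball 0 1)) {z : ℂ} (hz : z ∈ ball 0 1) :
    radialIntegral a (fun w => A + B * g w) z =
      A / ((a + 1 : ℝ) : ℂ) + B * radialIntegral a g z := by
  have hA := intervalIntegrable_rpow_mul_comp ha (continuousOn_const (c := A)) hz
  have hBg := intervalIntegrable_rpow_mul_comp ha (hg.const_smul B) hz
  rw [← radialIntegral_const ha A z, ← radialIntegral_const_mul]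
  simp only [radialIntegral, mul_add]
  exact intervalIntegral.integral_add hA hBg

lemma sigmaIter_succ (σ : ℝ) (m : ℕ) (p : ℂ → ℂ) :
    sigmaIter σ (m + 1) p =
      fun z => ((σ - (m : ℝ)) : ℂ) * radialIntegral (σ - ((m : ℝ) + 1)) (sigmaIter σ m p) z :=
  rfl

lemma differentiableOn_sigmaIter {σ : ℝ} {m : ℕ} (hm : -1 < σ - m) {p : ℂ → ℂ}
    (hp : DifferentiableOn ℂ p (ball 0 1)) :
    DifferentiableOn ℂ (sigmaIter σ m p) (ball 0 1) := by
  induction m with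
  | zero => exact hp
  | succ m ih =>
    push_cast at hm
    exact (differentiableOn_radialIntegral hm (ih (by linarith))).const_mul _

lemma sigmaIter_const_mul (σ : ℝ) (m : ℕ) (C : ℂ) (p : ℂ → ℂ) (z : ℂ) :
    sigmaIter σ m (fun w => C * p w) z = C * sigmaIter σ m p z := by
  induction m generalizing z with
  | zero => rfl
  | succ m ih =>
    simp only [sigmaIter_succ, funext ih, radialIntegral_const_mul, mul_left_comm _ C]

lemma radialIntegral_sigmaIter {σ c : ℝ} {m : ℕ} (hc : -1 < c) (hm : -1 < σ - m) {p : ℂ → ℂ}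
    (hp : DifferentiableOn ℂ p (ball 0 1)) :
    EqOn (radialIntegral c (sigmaIter σ m p)) (sigmaIter σ m (radialIntegral c p)) (ball 0 1) := by
  induction m with
  | zero => exact fun _ _ => rfl
  | succ m ih =>
    intro z hz
    push_cast at hm
    have hm' : -1 < σ - m := by linarith
    simp only [sigmaIter_succ, radialIntegral_const_mul]
    rw [radialIntegral_comm hc hm (differentiableOn_sigmaIter hm' hp).continuousOn hz,
      radialIntegral_congr (ih hm') hz]

lemma IsCara.mul_radialIntegral {p : ℂ → ℂ} (hp : IsCara p) {c : ℝ} (hc : -1 < c) :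
    IsCara fun z => ((c + 1 : ℝ) : ℂ) * radialIntegral c p z := by
  have hc0 : ((c + 1 : ℝ) : ℂ) ≠ 0 := Complex.ofReal_ne_zero.2 (by linarith)
  refine ⟨(differentiableOn_radialIntegral hc hp.1).const_mul _, ?_, fun z hz => ?_⟩
  · show _ * radialIntegral c p 0 = 1
    rw [radialIntegral_zero_right hc, hp.2.1, mul_div_cancel₀ _ hc0]
  · rw [Complex.re_ofReal_mul]
    exact mul_pos (by linarith) (re_radialIntegral_pos hc hp.1.continuousOn hp.2.2 hz)

/-- The Bernardi transform in the averaged form `F(z) = (c+1) ∫₀¹ s^(c-1) f(sz) ds`, obtained from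
`F(z) = ((c+1)/z^c) ∫₀^z t^(c-1) f(t) dt` by substituting `t = s z`. -/
theorem stmt14_general (σ : ℝ) (n : ℕ) (hσ : 0 < σ - ((n : ℝ) - 1))
    (β : ℝ)
    (c : ℝ) (hc1 : 0 < c + 1)
    (f : ℂ → ℂ) (hf : MemB σ n β f)
    (F : ℂ → ℂ)
    (hF : ∀ z ∈ Metric.ball (0 : ℂ) 1,
      F z = ((c + 1 : ℝ) : ℂ) *
        ∫ s in (0 : ℝ)..1, ((s ^ (c - 1) : ℝ) : ℂ) * f ((s : ℂ) * z)) :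
    MemB σ n β F := by
  obtain ⟨p, hp, hfp⟩ := hf
  have hc : -1 < c := by linarith
  have hσn : -1 < σ - n := by linarith
  have hc0 : ((c + 1 : ℝ) : ℂ) ≠ 0 := Complex.ofReal_ne_zero.2 hc1.ne'
  refine ⟨_, hp.mul_radialIntegral hc, fun z hz => ?_⟩
  have hfs : ∀ s ∈ uIcc (0 : ℝ) 1, ((s ^ (c - 1) : ℝ) : ℂ) * f ((s : ℂ) * z) =
      ((s ^ (c - 1) : ℝ) : ℂ) * ((s : ℂ) * z * (β + (1 - β) * sigmaIter σ n p ((s : ℂ) * z))) :=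
    fun s hs => by rw [hfp _ (ofReal_mul_mem_ball (by rwa [uIcc_of_le zero_le_one] at hs) hz)]
  rw [hF z hz, intervalIntegral.integral_congr hfs,
    integral_rpow_sub_one_mul_ofReal_mul c (fun w => β + (1 - β) * sigmaIter σ n p w) z,
    radialIntegral_const_add_mul hc _ _ (differentiableOn_sigmaIter hσn hp.1).continuousOn hz,
    sigmaIter_const_mul, ← radialIntegral_sigmaIter hc hσn hp.1 hz]
  field_simp

/-- `B_n^σ(β)` is closed under the Bernardi integral
`F(z) = ((c+1)/z^c) ∫_0^z t^{c-1} f(t) dt` (averaged form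
`F(z) = (c+1) ∫_0^1 s^{c-1} f(sz) ds`) when `c + 1 = σ - n > 0`. -/
theorem stmt14 (σ : ℝ) (n : ℕ) (hσ : 0 < σ - ((n : ℝ) - 1))
    (β : ℝ) (hβ0 : 0 ≤ β) (hβ1 : β < 1)
    (c : ℝ) (hc : c + 1 = σ - n) (hc1 : 0 < c + 1)
    (f : ℂ → ℂ) (hf : MemB σ n β f)
    (F : ℂ → ℂ)
    (hF : ∀ z ∈ Metric.ball (0 : ℂ) 1,
      F z = ((c + 1 : ℝ) : ℂ) *
        ∫ s in (0 : ℝ)..1, ((s ^ (c - 1) : ℝ) : ℂ) * f ((s : ℂ) * z)) :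
    MemB σ n β F :=
  stmt14_general σ n hσ β c hc1 f hf F hF
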